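/- arXiv:1409.8396 — 3 statements merged into one kernel-verified Lean document; each statement's English description precedes it below -/
import Mathlib

section
/- The sum of an indecomposable affine mesh ((A_i)_{i∈I}; φ_{i,j}; c_{i,j}) is a medial quandle whose orbits (the orbits of the action of its multiplication group) are exactly the fibres A_i, i ∈ I. -/
/-- The set of left translations of a binary algebra `(Q, op)`, viewed as permutations:
permutations `f` such that `f x = op a x` for some `a`. -/
def translations {Q : Type*} (op : Q → Q → Q) : Set (Equiv.Perm Q) :=
  { f | ∃ a : Q, ∀ x : Q, f x = op a x }

/-- The (left) multiplication group `LMlt(Q)`: the subgroup of the symmetric group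
generated by the left translations. -/
def LMlt {Q : Type*} (op : Q → Q → Q) : Subgroup (Equiv.Perm Q) :=
  Subgroup.closure (translations op)

/-- The displacement group `Dis(Q)`: the subgroup generated by all `L_a * L_b⁻¹`. -/
def Dis {Q : Type*} (op : Q → Q → Q) : Subgroup (Equiv.Perm Q) :=
  Subgroup.closure { f | ∃ g ∈ translations op, ∃ h ∈ translations op, f = g * h⁻¹ }

/-- `(Q, op)` is a quandle: idempotent, left distributive, left quasigroup. -/
def IsQuandle {Q : Type*} (op : Q → Q → Q) : Prop :=
  (∀ x, op x x = x) ∧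
  (∀ x y z, op x (op y z) = op (op x y) (op x z)) ∧
  (∀ x y, ∃! u, op x u = y)

/-- `(Q, op)` is medial. -/
def IsMedial {Q : Type*} (op : Q → Q → Q) : Prop :=
  ∀ x y u v, op (op x y) (op u v) = op (op x u) (op y v)

/-- The orbit of `e` under the multiplication group. -/
def qOrbit {Q : Type*} (op : Q → Q → Q) (e : Q) : Set Q :=
  { y | ∃ f ∈ LMlt op, f e = y }

/-- The orbit of `e` under the displacement group. -/
def disOrbit {Q : Type*} (op : Q → Q → Q) (e : Q) : Set Q :=
  { y | ∃ f ∈ Dis op, f e = y }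

/-- An affine mesh over an index set `I`: abelian groups `A i`, homomorphisms
`φ i j : A i →+ A j`, and constants `c i j ∈ A j`, satisfying (M1)–(M4). -/
structure AffineMesh (I : Type*) (A : I → Type*) [∀ i, AddCommGroup (A i)] where
  φ : ∀ i j : I, A i →+ A j
  c : ∀ i j : I, A j
  m1 : ∀ i : I, Function.Bijective fun x : A i => x - φ i i x
  m2 : ∀ i : I, c i i = 0
  m3 : ∀ i j j' k : I, (φ j k).comp (φ i j) = (φ j' k).comp (φ i j')
  m4 : ∀ i j k : I, φ j k (c i j) = φ k k (c i k - c j k)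

/-- The sum of an affine mesh: the binary operation on the disjoint union of the fibres,
`a * b = c i j + φ i j a + (1 - φ j j) b` for `a ∈ A i`, `b ∈ A j`. -/
def AffineMesh.sum {I : Type*} {A : I → Type*} [∀ i, AddCommGroup (A i)]
    (M : AffineMesh I A) (x y : Σ i, A i) : Σ i, A i :=
  ⟨y.1, M.c x.1 y.1 + M.φ x.1 y.1 x.2 + (y.2 - M.φ y.1 y.1 y.2)⟩

/-- An affine mesh is indecomposable if every fibre `A j` is generated by the
sets `c i j + Im (φ i j)`, `i ∈ I`. -/
def AffineMesh.Indecomposable {I : Type*} {A : I → Type*} [∀ i, AddCommGroup (A i)]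
    (M : AffineMesh I A) : Prop :=
  ∀ j : I, AddSubgroup.closure (⋃ i : I, Set.range fun a : A i => M.c i j + M.φ i j a) = ⊤


/-!
Every left translation `L_x` maps each fibre `A j` to itself, acting as the affine map
`b ↦ (c i j + φ i j a) + (1 - φ j j) b` for `x = (i, a)`; so the orbits lie inside the fibres.
Since `c j j = 0`, on the fibre `A j` the displacement `L_x L_{(j,0)}⁻¹` is the translation by
`c i j + φ i j a`. Indecomposability says these elements generate `A j`, so the translations
realised inside `LMlt` act transitively on every fibre.
-/

namespace AffineMesh

variable {I : Type*} {A : I → Type*} [∀ i, AddCommGroup (A i)] (M : AffineMesh I A)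

lemma φ_φ_apply (i j j' k : I) (a : A i) : M.φ j k (M.φ i j a) = M.φ j' k (M.φ i j' a) :=
  DFunLike.congr_fun (M.m3 i j j' k) a

lemma sum_self (x : Σ i, A i) : M.sum x x = x := by
  refine congrArg (Sigma.mk x.1) ?_
  rw [M.m2]
  abel

lemma sum_left_distrib (x y z : Σ i, A i) :
    M.sum x (M.sum y z) = M.sum (M.sum x y) (M.sum x z) := by
  obtain ⟨i, a⟩ := x
  obtain ⟨j, b⟩ := y
  obtain ⟨k, d⟩ := z
  dsimp only [sum]
  refine congrArg (Sigma.mk k) ?_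
  simp only [map_add, map_sub, M.φ_φ_apply i j k k, M.φ_φ_apply j j k k, M.m4 i j k]
  abel

lemma sum_medial (x y u v : Σ i, A i) :
    M.sum (M.sum x y) (M.sum u v) = M.sum (M.sum x u) (M.sum y v) := by
  obtain ⟨i, a⟩ := x
  obtain ⟨j, b⟩ := y
  obtain ⟨k, d⟩ := u
  obtain ⟨l, e⟩ := v
  dsimp only [sum]
  refine congrArg (Sigma.mk l) ?_
  simp only [map_add, map_sub, M.φ_φ_apply i j k l, M.φ_φ_apply j j l l, M.φ_φ_apply k k l l,
    M.m4 i j l, M.m4 i k l]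
  abel

def offset (x : Σ i, A i) (j : I) : A j := M.c x.1 j + M.φ x.1 j x.2

lemma sum_mk (x : Σ i, A i) (j : I) (b : A j) :
    M.sum x ⟨j, b⟩ = ⟨j, M.offset x j + (b - M.φ j j b)⟩ := rfl

lemma offset_mk_zero (j : I) : M.offset ⟨j, 0⟩ j = 0 := by
  rw [offset, M.m2, map_zero, add_zero]

noncomputable def oneSubφ (j : I) : A j ≃ A j := Equiv.ofBijective _ (M.m1 j)

lemma oneSubφ_apply (j : I) (b : A j) : M.oneSubφ j b = b - M.φ j j b := rfl

noncomputable def leftTranslation (x : Σ i, A i) : Equiv.Perm (Σ i, A i) where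
  toFun := M.sum x
  invFun z := ⟨z.1, (M.oneSubφ z.1).symm (z.2 - M.offset x z.1)⟩
  left_inv z := congrArg (Sigma.mk z.1) <| (M.oneSubφ z.1).symm_apply_eq.mpr <| by
    rw [oneSubφ_apply]
    exact add_sub_cancel_left _ _
  right_inv z := congrArg (Sigma.mk z.1) <| by
    rw [← oneSubφ_apply, Equiv.apply_symm_apply]
    exact add_sub_cancel _ _

lemma leftTranslation_apply (x z : Σ i, A i) : M.leftTranslation x z = M.sum x z := rfl

lemma leftTranslation_mem_LMlt (x : Σ i, A i) : M.leftTranslation x ∈ LMlt M.sum :=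
  Subgroup.subset_closure ⟨x, fun _ => rfl⟩

lemma leftTranslation_inv_mk (x : Σ i, A i) (j : I) (b : A j) :
    (M.leftTranslation x)⁻¹ ⟨j, b⟩ = ⟨j, (M.oneSubφ j).symm (b - M.offset x j)⟩ := rfl

lemma leftTranslation_mul_inv_mk (x y : Σ i, A i) (j : I) (b : A j) :
    (M.leftTranslation x * (M.leftTranslation y)⁻¹) ⟨j, b⟩ =
      ⟨j, b + (M.offset x j - M.offset y j)⟩ := by
  rw [Equiv.Perm.mul_apply, leftTranslation_inv_mk, leftTranslation_apply, sum_mk,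
    ← oneSubφ_apply, Equiv.apply_symm_apply]
  exact congrArg (Sigma.mk j) (by abel)

lemma fst_apply_of_mem_LMlt {f : Equiv.Perm (Σ i, A i)} (hf : f ∈ LMlt M.sum)
    (z : Σ i, A i) : (f z).1 = z.1 := by
  induction hf using Subgroup.closure_induction generalizing z with
  | mem g hg =>
    obtain ⟨x, hx⟩ := hg
    rw [hx z]
    rfl
  | one => rfl
  | mul g h _ _ hg hh => rw [Equiv.Perm.mul_apply, hg, hh]
  | inv g _ hg => simpa using (hg (g⁻¹ z)).symm

def fibreTranslations (j : I) : AddSubgroup (A j) where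
  carrier := {t | ∃ f ∈ LMlt M.sum, ∀ b : A j, f ⟨j, b⟩ = ⟨j, b + t⟩}
  zero_mem' := ⟨1, one_mem _, fun b => by rw [add_zero]; rfl⟩
  add_mem' := by
    rintro t s ⟨f, hf, hft⟩ ⟨g, hg, hgs⟩
    refine ⟨f * g, mul_mem hf hg, fun b => ?_⟩
    rw [Equiv.Perm.mul_apply, hgs, hft, add_assoc, add_comm s t]
  neg_mem' := by
    rintro t ⟨f, hf, hft⟩
    refine ⟨f⁻¹, inv_mem hf, fun b => f.injective ?_⟩
    rw [Equiv.Perm.coe_inv, Equiv.apply_symm_apply, hft, neg_add_cancel_right]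

lemma fibreTranslations_eq_top (hind : M.Indecomposable) (j : I) : M.fibreTranslations j = ⊤ := by
  rw [eq_top_iff, ← hind j, AddSubgroup.closure_le]
  rintro _ ⟨_, ⟨i, rfl⟩, a, rfl⟩
  refine ⟨M.leftTranslation ⟨i, a⟩ * (M.leftTranslation ⟨j, 0⟩)⁻¹,
    mul_mem (M.leftTranslation_mem_LMlt _) (inv_mem (M.leftTranslation_mem_LMlt _)), fun b => ?_⟩
  rw [leftTranslation_mul_inv_mk, offset_mk_zero, sub_zero]
  rfl

lemma qOrbit_sum (hind : M.Indecomposable) (x : Σ i, A i) :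
    qOrbit M.sum x = {y | y.1 = x.1} := by
  ext ⟨j, b⟩
  constructor
  · rintro ⟨f, hf, hfx⟩
    exact hfx ▸ M.fst_apply_of_mem_LMlt hf x
  · obtain ⟨i, a⟩ := x
    rintro (rfl : j = i)
    obtain ⟨f, hf, hfa⟩ : b - a ∈ M.fibreTranslations j := by
      rw [M.fibreTranslations_eq_top hind]
      trivial
    exact ⟨f, hf, by rw [hfa, add_sub_cancel]⟩

lemma isQuandle_sum : IsQuandle M.sum :=
  ⟨M.sum_self, M.sum_left_distrib, fun x y =>
    ⟨(M.leftTranslation x).symm y, (M.leftTranslation x).apply_symm_apply y,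
      fun _ hu => (M.leftTranslation x).eq_symm_apply.mpr hu⟩⟩

end AffineMesh

theorem mesh_sum_orbits_are_fibres_general {I : Type*} {A : I → Type*}
    [∀ i, AddCommGroup (A i)] (M : AffineMesh I A) (hind : M.Indecomposable) :
    IsQuandle M.sum ∧ IsMedial M.sum ∧
      ∀ x : Σ i, A i, qOrbit M.sum x = { y : Σ i, A i | y.1 = x.1 } :=
  ⟨M.isQuandle_sum, M.sum_medial, M.qOrbit_sum hind⟩

/-- Lemma 3.8: the sum of an indecomposable affine mesh is a medial quandle whose
orbits are exactly the fibres `A i`. -/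
theorem mesh_sum_orbits_are_fibres {I : Type*} [Nonempty I] {A : I → Type*}
    [∀ i, AddCommGroup (A i)] (M : AffineMesh I A) (hind : M.Indecomposable) :
    IsQuandle M.sum ∧ IsMedial M.sum ∧
      ∀ x : Σ i, A i, qOrbit M.sum x = { y : Σ i, A i | y.1 = x.1 } :=
  mesh_sum_orbits_are_fibres_general M hind
end

section
/- Let Q be a medial quandle in which all orbits have the same finite cardinality and at least one orbit, as a subquandle, is latin. Then every orbit of Q, as a subquandle, is latin. -/
theorem MulAction.stabilizer_eq_of_le_of_ncard_orbit_eq {G X : Type*} [Group G] [MulAction G X]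
    {x y : X} (hle : stabilizer G x ≤ stabilizer G y) (hfin : (orbit G x).Finite)
    (hcard : (orbit G x).ncard = (orbit G y).ncard) : stabilizer G x = stabilizer G y := by
  have : (stabilizer G x).FiniteIndex :=
    ⟨by rw [index_stabilizer]; exact ((Set.ncard_pos hfin).mpr (nonempty_orbit x)).ne'⟩
  refine hle.eq_of_not_lt fun hlt => (Subgroup.index_strictAnti hlt).ne ?_
  rw [index_stabilizer, index_stabilizer, hcard]

theorem Dis_le_LMlt {Q : Type*} {op : Q → Q → Q} : Dis op ≤ LMlt op := by
  rw [Dis, Subgroup.closure_le]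
  rintro _ ⟨g, hg, h, hh, rfl⟩
  exact mul_mem (Subgroup.subset_closure hg) (inv_mem (Subgroup.subset_closure hh))

theorem apply_mem_qOrbit {Q : Type*} {op : Q → Q → Q} {f : Equiv.Perm Q} (hf : f ∈ LMlt op)
    {e x : Q} (hx : x ∈ qOrbit op e) : f x ∈ qOrbit op e := by
  obtain ⟨g, hg, rfl⟩ := hx
  exact ⟨f * g, mul_mem hf hg, rfl⟩

theorem self_mem_qOrbit {Q : Type*} (op : Q → Q → Q) (e : Q) : e ∈ qOrbit op e :=
  ⟨1, one_mem _, rfl⟩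

def IsLatinOrbit {Q : Type*} (op : Q → Q → Q) (e : Q) : Prop :=
  ∀ a ∈ qOrbit op e, Set.BijOn (fun x => op x a) (qOrbit op e) (qOrbit op e)

open scoped commutatorElement

namespace IsQuandle

variable {Q : Type*} {op : Q → Q → Q}

noncomputable def leftPerm (hQ : IsQuandle op) (a : Q) : Equiv.Perm Q :=
  Equiv.ofBijective (op a)
    ⟨fun _ _ h => (hQ.2.2 a _).unique h rfl, fun y => (hQ.2.2 a y).exists⟩

@[simp]
theorem leftPerm_apply (hQ : IsQuandle op) (a x : Q) : hQ.leftPerm a x = op a x := rfl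

theorem translations_eq_range (hQ : IsQuandle op) : translations op = Set.range hQ.leftPerm := by
  ext f
  constructor
  · rintro ⟨a, ha⟩
    exact ⟨a, Equiv.ext fun x => (ha x).symm⟩
  · rintro ⟨a, rfl⟩
    exact ⟨a, fun _ => rfl⟩

theorem leftPerm_mem_LMlt (hQ : IsQuandle op) (a : Q) : hQ.leftPerm a ∈ LMlt op :=
  Subgroup.subset_closure (hQ.translations_eq_range ▸ Set.mem_range_self a)

theorem Dis_eq_closure (hQ : IsQuandle op) :
    Dis op = Subgroup.closure {f | ∃ a b, hQ.leftPerm a * (hQ.leftPerm b)⁻¹ = f} := by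
  simp [Dis, hQ.translations_eq_range, eq_comm]

theorem leftPerm_mul_inv_mem_Dis (hQ : IsQuandle op) (a b : Q) :
    hQ.leftPerm a * (hQ.leftPerm b)⁻¹ ∈ Dis op :=
  hQ.Dis_eq_closure ▸ Subgroup.subset_closure ⟨a, b, rfl⟩

theorem map_op_of_mem_LMlt (hQ : IsQuandle op) {f : Equiv.Perm Q} (hf : f ∈ LMlt op) (x y : Q) :
    f (op x y) = op (f x) (f y) := by
  induction hf using Subgroup.closure_induction generalizing x y with
  | mem g hg =>
    obtain ⟨a, ha⟩ := hg
    simp only [ha]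
    exact hQ.2.1 a x y
  | one => rfl
  | mul g h _ _ ihg ihh => simp only [Equiv.Perm.mul_apply, ihh, ihg]
  | inv g _ ih => exact g.injective (by simp [ih])

theorem conj_leftPerm (hQ : IsQuandle op) {f : Equiv.Perm Q} (hf : f ∈ LMlt op) (a : Q) :
    f * hQ.leftPerm a * f⁻¹ = hQ.leftPerm (f a) := by
  ext x
  simp [hQ.map_op_of_mem_LMlt hf]

theorem leftPerm_op (hQ : IsQuandle op) (a b : Q) :
    hQ.leftPerm (op a b) = hQ.leftPerm a * hQ.leftPerm b * (hQ.leftPerm a)⁻¹ :=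
  (hQ.conj_leftPerm (hQ.leftPerm_mem_LMlt a) b).symm

theorem commutatorElement_leftPerm (hQ : IsQuandle op) {f : Equiv.Perm Q} (hf : f ∈ LMlt op)
    (a : Q) :
    ⁅f, hQ.leftPerm a⁆ = hQ.leftPerm (f a) * (hQ.leftPerm a)⁻¹ := by
  rw [commutatorElement_def, ← hQ.conj_leftPerm hf]

theorem commutatorElement_leftPerm_mem_Dis (hQ : IsQuandle op) {f : Equiv.Perm Q}
    (hf : f ∈ LMlt op) (a : Q) :
    ⁅f, hQ.leftPerm a⁆ ∈ Dis op :=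
  hQ.commutatorElement_leftPerm hf a ▸ hQ.leftPerm_mul_inv_mem_Dis _ _

theorem op_apply_eq_commutatorElement (hQ : IsQuandle op) {f : Equiv.Perm Q} (hf : f ∈ LMlt op)
    (a x : Q) :
    op (f a) x = ⁅f, hQ.leftPerm a⁆ (op a x) := by
  rw [hQ.commutatorElement_leftPerm hf, Equiv.Perm.mul_apply, ← hQ.leftPerm_apply a x,
    Equiv.Perm.coe_inv, Equiv.symm_apply_apply, leftPerm_apply]

theorem leftPerm_inv_self (hQ : IsQuandle op) (a : Q) : (hQ.leftPerm a)⁻¹ a = a := by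
  rw [Equiv.Perm.inv_eq_iff_eq, leftPerm_apply, hQ.1]

theorem exists_mem_Dis_apply_eq (hQ : IsQuandle op) {f : Equiv.Perm Q} (hf : f ∈ LMlt op)
    (y : Q) :
    ∃ d ∈ Dis op, d y = f y := by
  induction hf using Subgroup.closure_induction generalizing y with
  | mem g hg =>
    obtain ⟨a, ha⟩ := hg
    refine ⟨_, hQ.leftPerm_mul_inv_mem_Dis a y, ?_⟩
    rw [Equiv.Perm.mul_apply, leftPerm_inv_self, ha, leftPerm_apply]
  | one => exact ⟨1, one_mem _, rfl⟩
  | mul g h _ _ ihg ihh =>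
    obtain ⟨d₁, hd₁, h₁⟩ := ihh y
    obtain ⟨d₂, hd₂, h₂⟩ := ihg (h y)
    exact ⟨d₂ * d₁, mul_mem hd₂ hd₁, by simp [h₁, h₂]⟩
  | inv g _ ih =>
    obtain ⟨d, hd, h⟩ := ih (g⁻¹ y)
    exact ⟨d⁻¹, inv_mem hd, by rw [Equiv.Perm.inv_eq_iff_eq, h]; simp⟩

theorem mem_qOrbit_iff (hQ : IsQuandle op) {e x : Q} :
    x ∈ qOrbit op e ↔ ∃ d ∈ Dis op, d e = x := by
  constructor
  · rintro ⟨f, hf, rfl⟩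
    exact hQ.exists_mem_Dis_apply_eq hf e
  · rintro ⟨d, hd, rfl⟩
    exact ⟨d, Dis_le_LMlt hd, rfl⟩

theorem orbit_Dis_eq_qOrbit (hQ : IsQuandle op) (e : Q) :
    MulAction.orbit (Dis op) e = qOrbit op e := by
  ext x
  simp [hQ.mem_qOrbit_iff, MulAction.mem_orbit_iff, Subgroup.smul_def]

theorem apply_eq_self_iff_of_ncard_qOrbit_eq (hQ : IsQuandle op) {e e₀ : Q}
    (hfin : (qOrbit op e).Finite) (hcard : (qOrbit op e).ncard = (qOrbit op e₀).ncard)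
    (hle : ∀ d ∈ Dis op, d e = e → d e₀ = e₀) {d : Equiv.Perm Q} (hd : d ∈ Dis op) :
    d e = e ↔ d e₀ = e₀ := by
  have := MulAction.stabilizer_eq_of_le_of_ncard_orbit_eq (G := Dis op) (x := e) (y := e₀)
    (fun c hc => hle c c.2 hc) (by rwa [hQ.orbit_Dis_eq_qOrbit])
    (by rwa [hQ.orbit_Dis_eq_qOrbit, hQ.orbit_Dis_eq_qOrbit])
  exact SetLike.ext_iff.mp this ⟨d, hd⟩

theorem leftPerm_op_mul_leftPerm (hQ : IsQuandle op) (hM : IsMedial op) (x y u : Q) :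
    hQ.leftPerm (op x y) * hQ.leftPerm u = hQ.leftPerm (op x u) * hQ.leftPerm y :=
  Equiv.ext fun v => hM x y u v

theorem conj_leftPerm_mul_inv_eq (hQ : IsQuandle op) (hM : IsMedial op) (c z a b : Q) :
    hQ.leftPerm c * (hQ.leftPerm a * (hQ.leftPerm b)⁻¹) * (hQ.leftPerm c)⁻¹ =
      hQ.leftPerm z * (hQ.leftPerm a * (hQ.leftPerm b)⁻¹) * (hQ.leftPerm z)⁻¹ := by
  obtain ⟨u, rfl⟩ : ∃ u, op c u = z := (hQ.2.2 c z).exists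
  have hmedial (y : Q) : hQ.leftPerm (op c y) =
      hQ.leftPerm (op c u) * hQ.leftPerm y * (hQ.leftPerm u)⁻¹ := by
    rw [← hQ.leftPerm_op_mul_leftPerm hM, mul_inv_cancel_right]
  calc hQ.leftPerm c * (hQ.leftPerm a * (hQ.leftPerm b)⁻¹) * (hQ.leftPerm c)⁻¹
      = hQ.leftPerm (op c a) * (hQ.leftPerm (op c b))⁻¹ := by
        rw [hQ.leftPerm_op, hQ.leftPerm_op]; group
    _ = _ := by rw [hmedial a, hmedial b]; group

theorem conj_leftPerm_eq_of_mem_Dis (hQ : IsQuandle op) (hM : IsMedial op) {d : Equiv.Perm Q}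
    (hd : d ∈ Dis op) (z w : Q) :
    hQ.leftPerm z * d * (hQ.leftPerm z)⁻¹ = hQ.leftPerm w * d * (hQ.leftPerm w)⁻¹ := by
  have hle : Dis op ≤ (MulAut.conj (hQ.leftPerm z)).toMonoidHom.eqLocus
      (MulAut.conj (hQ.leftPerm w)).toMonoidHom := by
    rw [hQ.Dis_eq_closure, Subgroup.closure_le]
    rintro _ ⟨a, b, rfl⟩
    exact hQ.conj_leftPerm_mul_inv_eq hM z w a b
  exact hle hd

theorem commute_leftPerm_mul_inv (hQ : IsQuandle op) (hM : IsMedial op) (a b c d : Q) :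
    Commute (hQ.leftPerm a * (hQ.leftPerm b)⁻¹) (hQ.leftPerm c * (hQ.leftPerm d)⁻¹) := by
  obtain ⟨c, rfl⟩ : ∃ c', op b c' = c := (hQ.2.2 b c).exists
  obtain ⟨d, rfl⟩ : ∃ d', op b d' = d := (hQ.2.2 b d).exists
  have hconj : hQ.leftPerm (op b c) * (hQ.leftPerm (op b d))⁻¹ =
      hQ.leftPerm b * (hQ.leftPerm c * (hQ.leftPerm d)⁻¹) * (hQ.leftPerm b)⁻¹ := by
    rw [hQ.leftPerm_op, hQ.leftPerm_op]; group
  rw [Commute, SemiconjBy, hconj]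
  calc _ = hQ.leftPerm a * (hQ.leftPerm c * (hQ.leftPerm d)⁻¹) * (hQ.leftPerm a)⁻¹ *
        (hQ.leftPerm a * (hQ.leftPerm b)⁻¹) := by group
    _ = _ := by rw [hQ.conj_leftPerm_mul_inv_eq hM a b c d]

theorem commute_of_mem_Dis (hQ : IsQuandle op) (hM : IsMedial op) {d d' : Equiv.Perm Q}
    (hd : d ∈ Dis op) (hd' : d' ∈ Dis op) : Commute d d' := by
  rw [hQ.Dis_eq_closure] at hd hd'
  have := Subgroup.isMulCommutative_closure
    (k := {f | ∃ a b, hQ.leftPerm a * (hQ.leftPerm b)⁻¹ = f})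
    (by rintro _ ⟨a, b, rfl⟩ _ ⟨c, d, rfl⟩; exact hQ.commute_leftPerm_mul_inv hM a b c d)
  exact congrArg Subtype.val (mul_comm' (⟨d, hd⟩ : Subgroup.closure _) ⟨d', hd'⟩)

theorem apply_eq_self_iff_of_mem_qOrbit (hQ : IsQuandle op) (hM : IsMedial op)
    {d : Equiv.Perm Q} (hd : d ∈ Dis op) {e x : Q} (hx : x ∈ qOrbit op e) :
    d x = x ↔ d e = e := by
  obtain ⟨c, hc, rfl⟩ := hQ.mem_qOrbit_iff.mp hx
  rw [← Equiv.Perm.mul_apply, (hQ.commute_of_mem_Dis hM hd hc).eq, Equiv.Perm.mul_apply,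
    c.apply_eq_iff_eq]

theorem commutatorElement_leftPerm_eq (hQ : IsQuandle op) (hM : IsMedial op) {d : Equiv.Perm Q}
    (hd : d ∈ Dis op) (z w : Q) : ⁅d, hQ.leftPerm z⁆ = ⁅d, hQ.leftPerm w⁆ := by
  calc ⁅d, hQ.leftPerm z⁆ = d * (hQ.leftPerm z * d⁻¹ * (hQ.leftPerm z)⁻¹) := by
        rw [commutatorElement_def]; group
    _ = d * (hQ.leftPerm w * d⁻¹ * (hQ.leftPerm w)⁻¹) := by
        rw [hQ.conj_leftPerm_eq_of_mem_Dis hM (inv_mem hd)]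
    _ = ⁅d, hQ.leftPerm w⁆ := by rw [commutatorElement_def]; group

theorem commutatorElement_leftPerm_eq_one (hQ : IsQuandle op) (hM : IsMedial op)
    {d : Equiv.Perm Q} (hd : d ∈ Dis op) {x : Q} (hx : d x = x) (z : Q) :
    ⁅d, hQ.leftPerm z⁆ = 1 := by
  rw [hQ.commutatorElement_leftPerm_eq hM hd z x,
    hQ.commutatorElement_leftPerm (Dis_le_LMlt hd), hx, mul_inv_cancel]

theorem isLatinOrbit_iff (hQ : IsQuandle op) (hM : IsMedial op) {e : Q}
    (hfin : (qOrbit op e).Finite) :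
    IsLatinOrbit op e ↔ ∀ d ∈ Dis op, ⁅d, hQ.leftPerm e⁆ e = e → d e = e := by
  constructor
  · intro hlat d hd hfix
    have hde : d e ∈ qOrbit op e := hQ.mem_qOrbit_iff.mpr ⟨d, hd, rfl⟩
    refine (hlat e (self_mem_qOrbit op e)).injOn hde (self_mem_qOrbit op e) ?_
    show op (d e) e = op e e
    rw [hQ.op_apply_eq_commutatorElement (Dis_le_LMlt hd), hQ.1, hfix]
  · intro hcrit a ha
    have hmaps : Set.MapsTo (fun x => op x a) (qOrbit op e) (qOrbit op e) :=
      fun x _ => apply_mem_qOrbit (hQ.leftPerm_mem_LMlt x) ha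
    refine (hfin.injOn_iff_bijOn_of_mapsTo hmaps).mp fun x hx y hy hxy => ?_
    obtain ⟨c, hc, rfl⟩ : ∃ c ∈ Dis op, c y = x := by
      obtain ⟨d, hd, rfl⟩ := hQ.mem_qOrbit_iff.mp hx
      obtain ⟨d', hd', rfl⟩ := hQ.mem_qOrbit_iff.mp hy
      exact ⟨d * d'⁻¹, mul_mem hd (inv_mem hd'), by simp⟩
    have hya : op y a ∈ qOrbit op e := apply_mem_qOrbit (hQ.leftPerm_mem_LMlt y) ha
    have hθ := hQ.commutatorElement_leftPerm_mem_Dis (Dis_le_LMlt hc) y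
    have hfix : ⁅c, hQ.leftPerm y⁆ (op y a) = op y a := by
      rw [← hQ.op_apply_eq_commutatorElement (Dis_le_LMlt hc)]
      exact hxy
    rw [hQ.apply_eq_self_iff_of_mem_qOrbit hM hθ hya, hQ.commutatorElement_leftPerm_eq hM hc y e]
      at hfix
    exact (hQ.apply_eq_self_iff_of_mem_qOrbit hM hc hy).mpr (hcrit c hc hfix)

end IsQuandle

/-- Proposition 5.1: in a medial quandle in which all orbits have the same finite size
and some orbit is latin (as a subquandle), every orbit is latin. -/
theorem all_orbits_latin_of_one_latin {Q : Type*} (op : Q → Q → Q)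
    (hQ : IsQuandle op) (hM : IsMedial op)
    (hfin : ∀ e : Q, (qOrbit op e).Finite)
    (hsame : ∀ e f : Q, (qOrbit op e).ncard = (qOrbit op f).ncard)
    (hlatin : ∃ e : Q, ∀ a ∈ qOrbit op e,
      Set.BijOn (fun x => op x a) (qOrbit op e) (qOrbit op e)) :
    ∀ e : Q, ∀ a ∈ qOrbit op e,
      Set.BijOn (fun x => op x a) (qOrbit op e) (qOrbit op e) := by
  obtain ⟨e₀, hlat₀⟩ := hlatin
  have hcrit₀ := (hQ.isLatinOrbit_iff hM (hfin e₀)).mp hlat₀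
  intro e
  have hstab : ∀ d ∈ Dis op, d e = e ↔ d e₀ = e₀ := fun d hd =>
    hQ.apply_eq_self_iff_of_ncard_qOrbit_eq (hfin e) (hsame e e₀)
      (fun c hc hce => hcrit₀ c hc (by rw [hQ.commutatorElement_leftPerm_eq_one hM hc hce]; rfl))
      hd
  refine (hQ.isLatinOrbit_iff hM (hfin e)).mpr fun d hd hfix => ?_
  rw [hstab _ (hQ.commutatorElement_leftPerm_mem_Dis (Dis_le_LMlt hd) e),
    hQ.commutatorElement_leftPerm_eq hM hd e e₀] at hfix
  exact (hstab d hd).mpr (hcrit₀ d hd hfix)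
end

section
/- Let Q be a medial quandle in which every orbit, as a subquandle, is latin. Then: (1) all orbit groups of Q are isomorphic as abelian groups; (2) all orbits of Q are isomorphic as quandles. -/
/-!
Mediality makes `Dis(Q)` abelian, and every left translation normalizes it, with
`L_c σ L_c⁻¹` independent of `c`. If `σ ∈ Dis(Q)` fixes `e`, pick `u ∈ Qf` with `u·f = e·f`
(the orbit `Qf` is latin): then `L_u = L_e` on `Qf`, which forces `σ u = u` and hence `σ f = f`.
So all points have the same stabilizer in `Dis(Q)`, and `α(e) ↦ α(f)` is a well-defined
bijection `Qe → Qf`. It respects the orbit-group addition because `Dis(Q)` is abelian, and the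
quandle operation because `α(c)·β(c) = τ(c)` for some `τ ∈ Dis(Q)` that does not depend on `c`.
-/

theorem commute_mul_inv_of_mul_inv_mul_comm {G : Type*} [Group G] {a b c d : G}
    (hc : a * b⁻¹ * c = c * b⁻¹ * a) (hd : a * b⁻¹ * d = d * b⁻¹ * a) :
    Commute (a * b⁻¹) (c * d⁻¹) :=
  calc a * b⁻¹ * (c * d⁻¹) = a * b⁻¹ * c * d⁻¹ := by group
    _ = c * d⁻¹ * (d * b⁻¹ * a) * d⁻¹ := by rw [hc]; group
    _ = c * d⁻¹ * (a * b⁻¹) := by rw [← hd]; group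

theorem exists_bijOn_orbits_of_fix_iff {α : Type*} {G : Subgroup (Equiv.Perm α)} {e f : α}
    (hfix : ∀ g ∈ G, g e = e ↔ g f = f) :
    ∃ ψ : α → α, (∀ g ∈ G, ψ (g e) = g f) ∧
      Set.BijOn ψ {y | ∃ g ∈ G, g e = y} {y | ∃ g ∈ G, g f = y} := by
  have apply_eq_iff : ∀ g ∈ G, ∀ h ∈ G, g e = h e ↔ g f = h f := fun g hg h hh => by
    simpa only [Equiv.Perm.mul_apply, Equiv.Perm.inv_eq_iff_eq] using
      hfix (h⁻¹ * g) (mul_mem (inv_mem hh) hg)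
  let ψ := Function.extend (fun g : G => g.1 e) (fun g : G => g.1 f) id
  have hψ : ∀ g ∈ G, ψ (g e) = g f := fun g hg =>
    Function.FactorsThrough.extend_apply (fun (a b : G) hab => (apply_eq_iff a a.2 b b.2).1 hab) id
      (⟨g, hg⟩ : G)
  refine ⟨ψ, hψ, ?_, ?_, ?_⟩
  · rintro _ ⟨g, hg, rfl⟩
    exact ⟨g, hg, (hψ g hg).symm⟩
  · rintro _ ⟨g, hg, rfl⟩ _ ⟨h, hh, rfl⟩ hgh
    rw [hψ g hg, hψ h hh] at hgh
    exact (apply_eq_iff g hg h hh).2 hgh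
  · rintro _ ⟨g, hg, rfl⟩
    exact ⟨g e, ⟨g, hg, rfl⟩, hψ g hg⟩

def autGroup {Q : Type*} (op : Q → Q → Q) : Subgroup (Equiv.Perm Q) where
  carrier := {φ | ∀ x y, φ (op x y) = op (φ x) (φ y)}
  mul_mem' {φ ψ} hφ hψ x y := by
    rw [Equiv.Perm.mul_apply, hψ x y, hφ]
    rfl
  one_mem' _ _ := rfl
  inv_mem' {φ} hφ x y := φ.injective <| by
    rw [hφ]
    simp

section

variable {Q : Type*} {op : Q → Q → Q}

namespace IsQuandle

noncomputable def leftMul (hQ : IsQuandle op) (a : Q) : Equiv.Perm Q :=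
  Equiv.ofBijective (op a) ((Function.bijective_iff_existsUnique _).2 (hQ.2.2 a))

@[simp]
theorem leftMul_apply (hQ : IsQuandle op) (a x : Q) : hQ.leftMul a x = op a x :=
  rfl

theorem leftMul_inv_apply_self (hQ : IsQuandle op) (a : Q) : (hQ.leftMul a)⁻¹ a = a :=
  Equiv.Perm.inv_eq_iff_eq.2 (hQ.1 a).symm

theorem exists_leftMul_eq_of_mem_translations (hQ : IsQuandle op) {g : Equiv.Perm Q}
    (hg : g ∈ translations op) : ∃ a, hQ.leftMul a = g :=
  let ⟨a, ha⟩ := hg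
  ⟨a, Equiv.ext fun x => (ha x).symm⟩

theorem leftMul_mem_autGroup (hQ : IsQuandle op) (a : Q) : hQ.leftMul a ∈ autGroup op :=
  hQ.2.1 a

theorem leftMul_mul_inv_mem_dis (hQ : IsQuandle op) (a b : Q) :
    hQ.leftMul a * (hQ.leftMul b)⁻¹ ∈ Dis op :=
  Subgroup.subset_closure ⟨_, ⟨a, fun _ => rfl⟩, _, ⟨b, fun _ => rfl⟩, rfl⟩

theorem dis_le_closure_leftMul_mul_inv (hQ : IsQuandle op) {H : Subgroup (Equiv.Perm Q)}
    (hH : ∀ a b, hQ.leftMul a * (hQ.leftMul b)⁻¹ ∈ H) : Dis op ≤ H := by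
  refine (Subgroup.closure_le H).2 ?_
  rintro _ ⟨_, ha, _, hb, rfl⟩
  obtain ⟨a, rfl⟩ := hQ.exists_leftMul_eq_of_mem_translations ha
  obtain ⟨b, rfl⟩ := hQ.exists_leftMul_eq_of_mem_translations hb
  exact hH a b

theorem dis_le_autGroup (hQ : IsQuandle op) : Dis op ≤ autGroup op :=
  hQ.dis_le_closure_leftMul_mul_inv fun a b =>
    mul_mem (hQ.leftMul_mem_autGroup a) (inv_mem (hQ.leftMul_mem_autGroup b))

theorem conj_leftMul {φ : Equiv.Perm Q} (hQ : IsQuandle op) (hφ : φ ∈ autGroup op) (a : Q) :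
    φ * hQ.leftMul a * φ⁻¹ = hQ.leftMul (φ a) := by
  ext x
  rw [Equiv.Perm.mul_apply, Equiv.Perm.mul_apply, leftMul_apply, hφ]
  simp

theorem conj_mem_dis {φ σ : Equiv.Perm Q} (hQ : IsQuandle op) (hφ : φ ∈ autGroup op)
    (hσ : σ ∈ Dis op) : φ * σ * φ⁻¹ ∈ Dis op := by
  suffices Dis op ≤ (Dis op).comap (MulAut.conj φ).toMonoidHom from this hσ
  refine hQ.dis_le_closure_leftMul_mul_inv fun a b => ?_
  have : φ * (hQ.leftMul a * (hQ.leftMul b)⁻¹) * φ⁻¹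
      = φ * hQ.leftMul a * φ⁻¹ * (φ * hQ.leftMul b * φ⁻¹)⁻¹ := by group
  simp only [Subgroup.mem_comap, MulEquiv.coe_toMonoidHom, MulAut.conj_apply, this,
    hQ.conj_leftMul hφ]
  exact hQ.leftMul_mul_inv_mem_dis _ _

theorem inv_mul_leftMul_mem_dis (hQ : IsQuandle op) (a b : Q) :
    (hQ.leftMul b)⁻¹ * hQ.leftMul a ∈ Dis op := by
  have h := hQ.conj_mem_dis (inv_mem (hQ.leftMul_mem_autGroup b)) (hQ.leftMul_mul_inv_mem_dis a b)
  simpa [mul_assoc] using h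

theorem op_mem_disOrbit (hQ : IsQuandle op) (a : Q) {e x : Q} (hx : x ∈ disOrbit op e) :
    op a x ∈ disOrbit op e := by
  obtain ⟨σ, hσ, rfl⟩ := hx
  refine ⟨hQ.leftMul a * (hQ.leftMul (σ e))⁻¹ * σ, mul_mem (hQ.leftMul_mul_inv_mem_dis _ _) hσ, ?_⟩
  rw [Equiv.Perm.mul_apply, Equiv.Perm.mul_apply, hQ.leftMul_inv_apply_self]
  rfl

end IsQuandle

theorem mem_disOrbit_self (op : Q → Q → Q) (e : Q) : e ∈ disOrbit op e :=
  ⟨1, one_mem _, rfl⟩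

theorem apply_mem_disOrbit {σ : Equiv.Perm Q} (hσ : σ ∈ Dis op) {e x : Q}
    (hx : x ∈ disOrbit op e) : σ x ∈ disOrbit op e :=
  let ⟨τ, hτ, hτx⟩ := hx
  ⟨σ * τ, mul_mem hσ hτ, by rw [Equiv.Perm.mul_apply, hτx]⟩

namespace IsMedial

theorem leftMul_mul_inv_mul_comm (hM : IsMedial op) (hQ : IsQuandle op) (a b c : Q) :
    hQ.leftMul a * (hQ.leftMul b)⁻¹ * hQ.leftMul c
      = hQ.leftMul c * (hQ.leftMul b)⁻¹ * hQ.leftMul a := by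
  have medial : hQ.leftMul (op b a) * hQ.leftMul c = hQ.leftMul (op b c) * hQ.leftMul a :=
    Equiv.ext fun x => hM b a c x
  rw [← hQ.leftMul_apply, ← hQ.leftMul_apply, ← hQ.conj_leftMul (hQ.leftMul_mem_autGroup b),
    ← hQ.conj_leftMul (hQ.leftMul_mem_autGroup b)] at medial
  simpa [mul_assoc] using medial

theorem isMulCommutative_dis (hM : IsMedial op) (hQ : IsQuandle op) :
    IsMulCommutative (Dis op) := by
  refine Subgroup.isMulCommutative_closure ?_
  rintro _ ⟨_, ha, _, hb, rfl⟩ _ ⟨_, hc, _, hd, rfl⟩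
  obtain ⟨a, rfl⟩ := hQ.exists_leftMul_eq_of_mem_translations ha
  obtain ⟨b, rfl⟩ := hQ.exists_leftMul_eq_of_mem_translations hb
  obtain ⟨c, rfl⟩ := hQ.exists_leftMul_eq_of_mem_translations hc
  obtain ⟨d, rfl⟩ := hQ.exists_leftMul_eq_of_mem_translations hd
  exact commute_mul_inv_of_mul_inv_mul_comm
    (hM.leftMul_mul_inv_mul_comm hQ a b c) (hM.leftMul_mul_inv_mul_comm hQ a b d)

theorem dis_commute (hM : IsMedial op) (hQ : IsQuandle op) {σ τ : Equiv.Perm Q}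
    (hσ : σ ∈ Dis op) (hτ : τ ∈ Dis op) : Commute σ τ :=
  have := hM.isMulCommutative_dis hQ
  setLike_mul_comm hσ hτ

theorem conj_leftMul_eq (hM : IsMedial op) (hQ : IsQuandle op) {σ : Equiv.Perm Q}
    (hσ : σ ∈ Dis op) (c d : Q) :
    hQ.leftMul c * σ * (hQ.leftMul c)⁻¹ = hQ.leftMul d * σ * (hQ.leftMul d)⁻¹ := by
  have h := (hM.dis_commute hQ hσ (hQ.inv_mul_leftMul_mem_dis c d)).eq
  calc hQ.leftMul c * σ * (hQ.leftMul c)⁻¹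
      = hQ.leftMul d * ((hQ.leftMul d)⁻¹ * hQ.leftMul c * σ) * (hQ.leftMul c)⁻¹ := by group
    _ = hQ.leftMul d * (σ * ((hQ.leftMul d)⁻¹ * hQ.leftMul c)) * (hQ.leftMul c)⁻¹ := by rw [h]
    _ = hQ.leftMul d * σ * (hQ.leftMul d)⁻¹ := by group

theorem op_dis_apply (hM : IsMedial op) (hQ : IsQuandle op) {σ : Equiv.Perm Q}
    (hσ : σ ∈ Dis op) (c d x : Q) :
    op c (σ x) = (hQ.leftMul d * σ * (hQ.leftMul d)⁻¹) (op c x) := by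
  rw [← hM.conj_leftMul_eq hQ hσ c d, ← hQ.leftMul_apply c x, Equiv.Perm.mul_apply,
    Equiv.Perm.mul_apply, Equiv.Perm.inv_def, Equiv.symm_apply_apply]
  rfl

theorem exists_dis_op_apply (hM : IsMedial op) (hQ : IsQuandle op) {α β : Equiv.Perm Q}
    (hα : α ∈ Dis op) (hβ : β ∈ Dis op) : ∃ τ ∈ Dis op, ∀ c, op (α c) (β c) = τ c := by
  rcases isEmpty_or_nonempty Q with _ | ⟨⟨d⟩⟩
  · exact ⟨1, one_mem _, isEmptyElim⟩
  have hαβ : α⁻¹ * β ∈ Dis op := mul_mem (inv_mem hα) hβ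
  refine ⟨α * (hQ.leftMul d * (α⁻¹ * β) * (hQ.leftMul d)⁻¹),
    mul_mem hα (hQ.conj_mem_dis (hQ.leftMul_mem_autGroup d) hαβ), fun c => ?_⟩
  calc op (α c) (β c) = α (op c ((α⁻¹ * β) c)) := by
        rw [hQ.dis_le_autGroup hα]
        simp
    _ = _ := by rw [hM.op_dis_apply hQ hαβ c d c, hQ.1]; rfl

theorem apply_eq_self_of_apply_eq_self (hM : IsMedial op) (hQ : IsQuandle op)
    {σ : Equiv.Perm Q} (hσ : σ ∈ Dis op) {e : Q} (he : σ e = e) {f : Q}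
    (hf : Set.BijOn (fun x => op x f) (disOrbit op f) (disOrbit op f)) : σ f = f := by
  have hf_mem := mem_disOrbit_self op f
  obtain ⟨u, hu, hue⟩ : ∃ u ∈ disOrbit op f, op u f = op e f :=
    hf.surjOn (hQ.op_mem_disOrbit e hf_mem)
  have hagree : ∀ x ∈ disOrbit op f, op u x = op e x := by
    rintro _ ⟨δ, hδ, rfl⟩
    rw [hM.op_dis_apply hQ hδ u e f, hue, ← hM.op_dis_apply hQ hδ e e f]
  -- `σ` commutes with `L_e` and `L_u = L_e` on `Qf`, so `R_f` cannot tell `σ u` from `u`.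
  have hσu : σ u = u := hf.injOn (apply_mem_disOrbit hσ hu) hu <| by
    calc op (σ u) f = σ (op u (σ⁻¹ f)) := by rw [hQ.dis_le_autGroup hσ]; simp
      _ = σ (op e (σ⁻¹ f)) := by rw [hagree _ (apply_mem_disOrbit (inv_mem hσ) hf_mem)]
      _ = op u f := by rw [hQ.dis_le_autGroup hσ, he, hue]; simp
  obtain ⟨δ, hδ, rfl⟩ := hu
  apply δ.injective
  rw [← Equiv.Perm.mul_apply, ← (hM.dis_commute hQ hσ hδ).eq, Equiv.Perm.mul_apply, hσu]

end IsMedial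

end

/-- Proposition 5.2: in a medial quandle in which all orbits are latin,
(1) all orbit groups are isomorphic (there is a bijection between any two orbits
sending `e` to `f` and preserving the orbit group addition `α(e) + β(e) = (αβ)(e)`),
and (2) all orbits are isomorphic as quandles. -/
theorem latin_orbits_isomorphic {Q : Type*} (op : Q → Q → Q)
    (hQ : IsQuandle op) (hM : IsMedial op)
    (hlatin : ∀ e : Q, ∀ a ∈ disOrbit op e,
      Set.BijOn (fun x => op x a) (disOrbit op e) (disOrbit op e)) :
    (∀ e f : Q, ∃ ψ : Q → Q,
      Set.BijOn ψ (disOrbit op e) (disOrbit op f) ∧ ψ e = f ∧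
      ∀ α β γ δ : Equiv.Perm Q, α ∈ Dis op → β ∈ Dis op → γ ∈ Dis op → δ ∈ Dis op →
        ψ (α e) = γ f → ψ (β e) = δ f → ψ ((α * β) e) = (γ * δ) f) ∧
    (∀ e f : Q, ∃ ψ : Q → Q,
      Set.BijOn ψ (disOrbit op e) (disOrbit op f) ∧
      ∀ a ∈ disOrbit op e, ∀ b ∈ disOrbit op e, ψ (op a b) = op (ψ a) (ψ b)) := by
  have hfix : ∀ e f : Q, ∀ g ∈ Dis op, g e = e ↔ g f = f := fun e f g hg =>
    ⟨fun he => hM.apply_eq_self_of_apply_eq_self hQ hg he (hlatin f f (mem_disOrbit_self op f)),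
      fun hf => hM.apply_eq_self_of_apply_eq_self hQ hg hf (hlatin e e (mem_disOrbit_self op e))⟩
  refine ⟨fun e f => ?_, fun e f => ?_⟩
  · obtain ⟨ψ, hψ, hbij⟩ := exists_bijOn_orbits_of_fix_iff (hfix e f)
    refine ⟨ψ, hbij, by simpa using hψ 1 (one_mem _), fun α β γ δ hα hβ hγ _ hαγ hβδ => ?_⟩
    rw [hψ α hα] at hαγ
    rw [hψ β hβ] at hβδ
    calc ψ ((α * β) e) = β (α f) := by rw [hψ _ (mul_mem hα hβ), (hM.dis_commute hQ hα hβ).eq]; rfl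
      _ = (γ * δ) f := by
        rw [hαγ, ← Equiv.Perm.mul_apply, (hM.dis_commute hQ hβ hγ).eq, Equiv.Perm.mul_apply, hβδ]
        rfl
  · obtain ⟨ψ, hψ, hbij⟩ := exists_bijOn_orbits_of_fix_iff (hfix e f)
    refine ⟨ψ, hbij, ?_⟩
    rintro _ ⟨α, hα, rfl⟩ _ ⟨β, hβ, rfl⟩
    obtain ⟨τ, hτ, hop⟩ := hM.exists_dis_op_apply hQ hα hβ
    rw [hop, hψ τ hτ, hψ α hα, hψ β hβ, hop]
end
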